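/- arXiv:1802.06427 — 3 statements merged into one kernel-verified Lean document; each statement's English description precedes it below -/
import Mathlib

section
/- For h ≥ 0 define ℋ_h = { Σ_{i≥0} a_i X^i ∈ ℚ_p[[X]] : inf_{i≥0} (ord_p(a_i) + h·ℓ(i)) > −∞ }, where ℓ(0)=0 and ℓ(i) = ⌊log_p i⌋+1 for i ≥ 1. Then ℋ_h is a ℚ_p-subspace of ℚ_p[[X]] that is closed under multiplication by elements of ℤ_p[[X]]; in particular ℋ_h is a module over ℤ_p[[X]], and ℋ_0 equals the set of power series with bounded coefficients, i.e. ℋ_0 = ℤ_p[[X]] ⊗_{ℤ_p} ℚ_p. -/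
/-!
STATEMENT 5: For `h ≥ 0` define
`ℋ_h = { Σ a_i X^i ∈ ℚ_p[[X]] : inf_i (ord_p(a_i) + h·ℓ(i)) > −∞ }`, with
`ℓ(0) = 0`, `ℓ(i) = ⌊log_p i⌋ + 1` for `i ≥ 1`.  Then `ℋ_h` is a `ℚ_p`-subspace of
`ℚ_p[[X]]` closed under multiplication by elements of `ℤ_p[[X]]` (so a module over
`ℤ_p[[X]]`), and `ℋ_0` equals the set of power series with bounded coefficients,
i.e. `ℋ_0 = ℤ_p[[X]] ⊗_{ℤ_p} ℚ_p` (every element is `p^{-n}` times an integral series).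
-/

/-- The logarithmic-order function `ℓ`. -/
def ell (p : ℕ) (i : ℕ) : ℕ := if i = 0 then 0 else Nat.log p i + 1

/-- The Amice–Vélu space `ℋ_h` of power series of logarithmic order `h`; the condition
`a_i ≠ 0 → C ≤ ord_p(a_i) + h·ℓ(i)` encodes `inf_i (ord_p(a_i) + h·ℓ(i)) > −∞` with the
convention `ord_p(0) = +∞`. -/
def Hh (p : ℕ) [Fact p.Prime] (h : ℕ) : Set (PowerSeries ℚ_[p]) :=
  {f | ∃ C : ℤ, ∀ i : ℕ, PowerSeries.coeff (R := ℚ_[p]) i f ≠ 0 →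
    C ≤ (PowerSeries.coeff (R := ℚ_[p]) i f).valuation + (h : ℤ) * (ell p i : ℤ)}

/-! Written with norms, membership in `ℋ_h` says `‖aᵢ‖ ≤ p ^ (h ℓ(i) - C)`, and the ultrametric
inequality gives closure under sums. For a product `(∑ bⱼ Xʲ) · f` with `‖bⱼ‖ ≤ 1`, the
coefficient of `Xⁱ` is a sum of terms `bⱼ aₖ` with `k ≤ i`; since `ℓ` is nondecreasing each is
bounded by `p ^ (h ℓ(i) - C)`, and so is their sum. For `h = 0` the bound is uniform, and
multiplying by `p ^ n` with `n ≥ -C` makes all coefficients integral. -/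

open PowerSeries
open scoped PowerSeries

lemma ell_mono (p : ℕ) : Monotone (ell p) := by
  intro i j hij
  unfold ell
  split_ifs with hi hj hj
  · exact le_rfl
  · exact Nat.zero_le _
  · omega
  · exact Nat.succ_le_succ (Nat.log_mono_right hij)

namespace Padic

variable {p : ℕ} [Fact p.Prime]

lemma norm_le_zpow_iff_le_valuation_add (x : ℚ_[p]) (C k : ℤ) :
    ‖x‖ ≤ (p : ℝ) ^ (k - C) ↔ (x ≠ 0 → C ≤ x.valuation + k) := by
  have hp : (1 : ℝ) < p := by exact_mod_cast (Fact.out : p.Prime).one_lt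
  by_cases hx : x = 0
  · simp only [hx, norm_zero, ne_eq, not_true_eq_false, IsEmpty.forall_iff, iff_true]
    positivity
  · rw [norm_eq_zpow_neg_valuation hx, zpow_le_zpow_iff_right₀ hp]
    simp only [ne_eq, hx, not_false_eq_true, forall_const]
    omega

end Padic

section GrowthSubmodule

variable (p : ℕ) [Fact p.Prime]

/-- The power series `∑ aᵢ Xⁱ` with `inf_i (ord_p aᵢ + w i) > -∞`, in the norm form
`‖aᵢ‖ ≤ p ^ (w i - C)`; thus `ℋ_h` is the case `w = h·ℓ`. -/
def growthSubmodule (w : ℕ → ℤ) : Submodule ℚ_[p] ℚ_[p]⟦X⟧ where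
  carrier := {f | ∃ C : ℤ, ∀ i, ‖coeff i f‖ ≤ (p : ℝ) ^ (w i - C)}
  zero_mem' := ⟨0, fun i => by simp only [map_zero, norm_zero]; positivity⟩
  add_mem' := by
    rintro f g ⟨C, hC⟩ ⟨D, hD⟩
    have hp : (1 : ℝ) ≤ p := by exact_mod_cast (Fact.out : p.Prime).one_le
    refine ⟨min C D, fun i => ?_⟩
    rw [map_add]
    refine (IsUltrametricDist.norm_add_le_max _ _).trans (max_le ?_ ?_)
    · exact (hC i).trans (zpow_le_zpow_right₀ hp (by omega))
    · exact (hD i).trans (zpow_le_zpow_right₀ hp (by omega))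
  smul_mem' := by
    rintro c f ⟨C, hC⟩
    by_cases hc : c = 0
    · subst hc
      exact ⟨0, fun i => by simp only [zero_smul, map_zero, norm_zero]; positivity⟩
    have hp : (p : ℝ) ≠ 0 := by exact_mod_cast (Fact.out : p.Prime).ne_zero
    refine ⟨C + c.valuation, fun i => ?_⟩
    rw [coeff_smul, smul_eq_mul, norm_mul, Padic.norm_eq_zpow_neg_valuation hc]
    calc (p : ℝ) ^ (-c.valuation) * ‖coeff i f‖
        ≤ (p : ℝ) ^ (-c.valuation) * (p : ℝ) ^ (w i - C) := by gcongr; exact hC i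
      _ = (p : ℝ) ^ (w i - (C + c.valuation)) := by
        rw [← zpow_add₀ hp]; ring_nf

variable {p}

lemma mem_growthSubmodule {w : ℕ → ℤ} {f : ℚ_[p]⟦X⟧} :
    f ∈ growthSubmodule p w ↔ ∃ C : ℤ, ∀ i, ‖coeff i f‖ ≤ (p : ℝ) ^ (w i - C) :=
  Iff.rfl

lemma Hh_eq_growthSubmodule (h : ℕ) :
    Hh p h = growthSubmodule p (fun i => h * ell p i) := by
  ext f
  simp only [Hh, Set.mem_ofPred_eq, SetLike.mem_coe, mem_growthSubmodule,
    Padic.norm_le_zpow_iff_le_valuation_add]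

lemma map_coe_mul_mem_growthSubmodule {w : ℕ → ℤ} (hw : Monotone w) (g : ℤ_[p]⟦X⟧)
    {f : ℚ_[p]⟦X⟧} (hf : f ∈ growthSubmodule p w) :
    map PadicInt.Coe.ringHom g * f ∈ growthSubmodule p w := by
  obtain ⟨C, hC⟩ := hf
  have hp : (1 : ℝ) ≤ p := by exact_mod_cast (Fact.out : p.Prime).one_le
  refine ⟨C, fun i => ?_⟩
  rw [coeff_mul]
  refine IsUltrametricDist.norm_sum_le_of_forall_le_of_nonneg (by positivity) fun x hx => ?_
  have hxi : x.2 ≤ i := by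
    have := Finset.HasAntidiagonal.mem_antidiagonal.mp hx
    omega
  rw [norm_mul, coeff_map]
  calc ‖PadicInt.Coe.ringHom (coeff x.1 g)‖ * ‖coeff x.2 f‖ ≤ 1 * (p : ℝ) ^ (w x.2 - C) := by
        gcongr
        · exact PadicInt.norm_le_one _
        · exact hC x.2
    _ ≤ (p : ℝ) ^ (w i - C) := by
        rw [one_mul]
        exact zpow_le_zpow_right₀ hp (by linarith [hw hxi])

lemma map_coe_mem_growthSubmodule_zero (g : ℤ_[p]⟦X⟧) :
    map PadicInt.Coe.ringHom g ∈ growthSubmodule p 0 :=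
  ⟨0, fun i => by
    rw [coeff_map, Pi.zero_apply, zero_sub, neg_zero, zpow_zero]
    exact PadicInt.norm_le_one (coeff i g)⟩

lemma exists_map_coe_eq_of_norm_coeff_le_one {f : ℚ_[p]⟦X⟧} (hf : ∀ i, ‖coeff i f‖ ≤ 1) :
    ∃ g : ℤ_[p]⟦X⟧, map PadicInt.Coe.ringHom g = f :=
  ⟨mk fun i => ⟨coeff i f, hf i⟩, by
    ext i
    exact congrArg Subtype.val (coeff_mk (R := ℤ_[p]) i _)⟩

lemma mem_growthSubmodule_zero_iff {f : ℚ_[p]⟦X⟧} :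
    f ∈ growthSubmodule p 0 ↔
      ∃ (n : ℕ) (g : ℤ_[p]⟦X⟧), f = ((p : ℚ_[p]) ^ n)⁻¹ • map PadicInt.Coe.ringHom g := by
  have hp : (p : ℚ_[p]) ≠ 0 := by exact_mod_cast (Fact.out : p.Prime).ne_zero
  constructor
  · rintro ⟨C, hC⟩
    have hp1 : (1 : ℝ) ≤ p := by exact_mod_cast (Fact.out : p.Prime).one_le
    have hpR : (p : ℝ) ≠ 0 := by positivity
    obtain ⟨g, hg⟩ : ∃ g : ℤ_[p]⟦X⟧,
        map PadicInt.Coe.ringHom g = ((p : ℚ_[p]) ^ (-C).toNat) • f := by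
      refine exists_map_coe_eq_of_norm_coeff_le_one fun i => ?_
      rw [coeff_smul, smul_eq_mul, norm_mul, Padic.norm_p_pow]
      calc (p : ℝ) ^ (-((-C).toNat : ℤ)) * ‖coeff i f‖
          ≤ (p : ℝ) ^ (-((-C).toNat : ℤ)) * (p : ℝ) ^ (0 - C) := by gcongr; exact hC i
        _ = (p : ℝ) ^ (-((-C).toNat : ℤ) - C) := by rw [← zpow_add₀ hpR]; ring_nf
        _ ≤ 1 := zpow_le_one_of_nonpos₀ hp1 (by omega)
    exact ⟨(-C).toNat, g, by rw [hg, smul_smul, inv_mul_cancel₀ (pow_ne_zero _ hp), one_smul]⟩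
  · rintro ⟨n, g, rfl⟩
    exact Submodule.smul_mem _ _ (map_coe_mem_growthSubmodule_zero g)

end GrowthSubmodule

theorem Hh_submodule_and_H0 (p : ℕ) [Fact p.Prime] (h : ℕ) :
    (0 : PowerSeries ℚ_[p]) ∈ Hh p h ∧
    (∀ f g : PowerSeries ℚ_[p], f ∈ Hh p h → g ∈ Hh p h → f + g ∈ Hh p h) ∧
    (∀ (c : ℚ_[p]) (f : PowerSeries ℚ_[p]), f ∈ Hh p h → c • f ∈ Hh p h) ∧
    (∀ (g : PowerSeries ℤ_[p]) (f : PowerSeries ℚ_[p]), f ∈ Hh p h →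
      (PowerSeries.map (PadicInt.Coe.ringHom) g) * f ∈ Hh p h) ∧
    (Hh p 0 =
      {f | ∃ (n : ℕ) (g : PowerSeries ℤ_[p]),
        f = ((p : ℚ_[p]) ^ n)⁻¹ • PowerSeries.map (PadicInt.Coe.ringHom) g}) := by
  have hw : Monotone fun i => (h : ℤ) * ell p i := fun i j hij =>
    mul_le_mul_of_nonneg_left (by exact_mod_cast ell_mono p hij) (Int.natCast_nonneg h)
  have hH0 : Hh p 0 = growthSubmodule p 0 := by
    rw [Hh_eq_growthSubmodule]
    simp only [Nat.cast_zero, zero_mul]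
    rfl
  rw [hH0, Hh_eq_growthSubmodule h]
  exact ⟨Submodule.zero_mem _, fun f g => Submodule.add_mem _, fun c f => Submodule.smul_mem _ c,
    fun g f => map_coe_mul_mem_growthSubmodule hw g,
    Set.ext fun f => mem_growthSubmodule_zero_iff⟩
end

section
/- Let Λ = ℤ_p[[X]] and let M be a finitely generated Λ-module. If M/(p, X)M is finite (automatic) and there exist infinitely many pairwise coprime height-one prime elements f_n ∈ Λ such that M/f_n M is a finitely generated ℤ_p-module of bounded rank r for all n, then M is a torsion Λ-module or has Λ-rank at most r; in particular if M/f_n M is finite for infinitely many pairwise coprime f_n, then M is Λ-torsion. -/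
/-!
Over a domain `S`, a finitely generated module `M` of generic rank `g` contains `g` independent
elements `w` with `c • M ⊆ span w` for some `c ≠ 0`. Reducing modulo a prime `f` not dividing
`c`, any relation `∑ aᵢ wᵢ ∈ f M` forces `f ∣ aᵢ`; if moreover `f` does not divide the
uniformizer of the discrete valuation ring `R ⊆ S`, no nonzero element of `R` is divisible by
`f`, so the images of the `wᵢ` stay `R`-independent in `M / f M`. In a ring with divisor chain
condition such as `ℤ_p⟦X⟧`, the nonzero element `c ϖ` has only finitely many prime divisors up
to associates, so all but finitely many `f_n` qualify and `g ≤ rank_R (M / f_n M)`. A finite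
`M / f_n M` has rank `0` over the characteristic-zero ring `ℤ_p`, forcing `g = 0`.
-/

open Submodule

theorem Module.exists_linearIndependent_smul_mem_span {R M : Type*} [CommRing R] [IsDomain R]
    [AddCommGroup M] [Module R M] [Module.Finite R M] :
    ∃ (w : Fin (finrank R M) → M) (c : R), LinearIndependent R w ∧ c ≠ 0 ∧
      ∀ x, c • x ∈ span R (Set.range w) := by
  obtain ⟨w, hw⟩ := exists_linearIndependent_of_le_rank (finrank_eq_rank R M).le
  have hspan : Module.rank R (span R (Set.range w)) = finrank R M := by
    rw [rank_span hw]
    exact Cardinal.lift_eq_nat_iff.{_, 0}.mp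
      (by simpa using Cardinal.mk_range_eq_of_injective hw.injective)
  have hquot : Module.rank R (M ⧸ span R (Set.range w)) = 0 := by
    refine Cardinal.eq_of_add_eq_add_right (b := Module.rank R M) ?_ (rank_lt_aleph0 R M)
    rw [zero_add]
    have hnullity := rank_quotient_add_rank_of_isDomain (span R (Set.range w))
    rwa [hspan, finrank_eq_rank] at hnullity
  obtain ⟨c, hc, hc0⟩ :=
    annihilator_top_inter_nonZeroDivisors (Module.rank_eq_zero_iff_isTorsion.mp hquot)
  refine ⟨w, c, hw, nonZeroDivisors.ne_zero hc0, fun x => ?_⟩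
  rw [← Quotient.mk_eq_zero, Quotient.mk_smul]
  exact Submodule.mem_annihilator.mp hc _ mem_top

theorem Set.finite_setOf_prime_dvd {α ι : Type*} [CommMonoidWithZero α] [IsCancelMulZero α]
    [WfDvdMonoid α] {f : ι → α} (hf : ∀ n, Prime (f n))
    (hf' : Pairwise fun m n => ¬ Associated (f m) (f n)) {c : α} (hc : c ≠ 0) :
    {n | f n ∣ c}.Finite := by
  obtain ⟨s, hs, hsc⟩ := WfDvdMonoid.exists_factors c hc
  have hfactor : ∀ n ∈ {n | f n ∣ c}, ∃ b ∈ s, Associated (f n) b := fun n hn => by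
    obtain ⟨b, hb, hnb⟩ := (hf n).exists_mem_multiset_dvd (hn.trans hsc.symm.dvd)
    exact ⟨b, hb, (hf n).irreducible.associated_of_dvd (hs b hb) hnb⟩
  choose! b hbs hb using hfactor
  refine Set.Finite.of_injOn (t := {b | b ∈ s}) (f := b) hbs (fun m hm n hn hmn => ?_)
    s.finite_toSet
  by_contra hne
  exact hf' hne ((hb m hm).trans (hmn ▸ (hb n hn).symm))

theorem dvd_of_sum_smul_mem_span_singleton_smul_top {R M ι : Type*} [CommRing R] [IsDomain R]
    [AddCommGroup M] [Module R M] [Fintype ι] {w : ι → M} {c f : R}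
    (hw : LinearIndependent R w) (hcw : ∀ x, c • x ∈ span R (Set.range w))
    (hf : Prime f) (hfc : ¬ f ∣ c) {a : ι → R}
    (ha : ∑ i, a i • w i ∈ Ideal.span {f} • (⊤ : Submodule R M)) (i : ι) : f ∣ a i := by
  obtain ⟨m, hm⟩ : ∃ m : M, f • m = ∑ i, a i • w i := by
    simpa [ideal_span_singleton_smul, ← SetLike.mem_coe, coe_pointwise_smul,
      Set.mem_smul_set] using ha
  obtain ⟨b, hb⟩ := (mem_span_range_iff_exists_fun R).mp (hcw m)
  have hrel : ∑ i, (c * a i) • w i = ∑ i, (f * b i) • w i := by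
    simp only [mul_smul, ← Finset.smul_sum, hb, ← hm, smul_comm c f]
  have hcoeff := Fintype.linearIndependent_iff.mp hw (fun i => c * a i - f * b i) (by
    simp only [sub_smul, Finset.sum_sub_distrib, hrel, sub_self])
  exact (hf.dvd_or_dvd ⟨b i, sub_eq_zero.mp (hcoeff i)⟩).resolve_left hfc

theorem IsDiscreteValuationRing.eq_zero_of_prime_dvd_algebraMap {R S : Type*} [CommRing R]
    [IsDomain R] [IsDiscreteValuationRing R] [CommRing S] [Algebra R S] {ϖ : R}
    (hϖ : Irreducible ϖ) {f : S} (hf : Prime f) (hfϖ : ¬ f ∣ algebraMap R S ϖ) {a : R}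
    (ha : f ∣ algebraMap R S a) : a = 0 := by
  by_contra ha0
  obtain ⟨n, u, rfl⟩ := eq_unit_mul_pow_irreducible ha0 hϖ
  rw [map_mul, (u.isUnit.map _).dvd_mul_left, map_pow] at ha
  exact hfϖ (hf.dvd_of_dvd_pow ha)

theorem linearIndependent_restrictScalars_quotient_mk {R S M ι : Type*} [CommRing R]
    [CommRing S] [IsDomain S] [Algebra R S] [AddCommGroup M] [Module S M] [Fintype ι]
    {w : ι → M} {c f : S} (hw : LinearIndependent S w) (hcw : ∀ x, c • x ∈ span S (Set.range w))
    (hf : Prime f) (hfc : ¬ f ∣ c) (hfR : ∀ a : R, f ∣ algebraMap R S a → a = 0) :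
    LinearIndependent R fun i => (RestrictScalars.addEquiv R S
      (M ⧸ Ideal.span {f} • (⊤ : Submodule S M))).symm (Submodule.Quotient.mk (w i)) := by
  refine Fintype.linearIndependent_iffₛ.mpr fun a b hab i => sub_eq_zero.mp (hfR _ ?_)
  rw [map_sub]
  refine dvd_of_sum_smul_mem_span_singleton_smul_top
    (a := fun i => algebraMap R S (a i) - algebraMap R S (b i)) hw hcw hf hfc ?_ i
  rw [← Quotient.mk_eq_zero]
  have hmk := congrArg (RestrictScalars.addEquiv R S _) hab
  simp only [map_sum, RestrictScalars.addEquiv_map_smul, AddEquiv.apply_symm_apply,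
    ← mkQ_apply, ← map_smul] at hmk
  simp only [sub_smul, Finset.sum_sub_distrib, ← mkQ_apply, map_sub, map_sum, hmk, sub_self]

theorem eventually_finrank_le_rank_restrictScalars_quotient {R S M ι : Type*} [CommRing R]
    [IsDomain R] [IsDiscreteValuationRing R] [CommRing S] [IsDomain S] [WfDvdMonoid S]
    [Algebra R S] [AddCommGroup M] [Module S M] [Module.Finite S M] {ϖ : R} (hϖ : Irreducible ϖ)
    (hϖS : algebraMap R S ϖ ≠ 0) {f : ι → S} (hf : ∀ n, Prime (f n))
    (hf' : Pairwise fun m n => ¬ Associated (f m) (f n)) :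
    ∀ᶠ n in Filter.cofinite, (Module.finrank S M : Cardinal) ≤
      Module.rank R (RestrictScalars R S (M ⧸ Ideal.span {f n} • (⊤ : Submodule S M))) := by
  obtain ⟨w, c, hw, hc, hcw⟩ := Module.exists_linearIndependent_smul_mem_span (R := S) (M := M)
  have hgood : ∀ᶠ n in Filter.cofinite, ¬ f n ∣ c * algebraMap R S ϖ :=
    Filter.eventually_cofinite.mpr
      (by simpa using Set.finite_setOf_prime_dvd hf hf' (mul_ne_zero hc hϖS))
  filter_upwards [hgood] with n hn
  have hli := linearIndependent_restrictScalars_quotient_mk hw hcw (hf n)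
    (fun h => hn (h.mul_right _)) (fun a => IsDiscreteValuationRing.eq_zero_of_prime_dvd_algebraMap
      hϖ (hf n) (fun h => hn (h.mul_left _)))
  simpa using hli.cardinal_lift_le_rank

theorem Module.rank_eq_zero_of_finite {R N : Type*} [CommRing R] [IsDomain R] [CharZero R]
    [AddCommMonoid N] [Module R N] [Finite N] : Module.rank R N = 0 := by
  let := Module.addCommMonoidToAddCommGroup R (M := N)
  exact Module.rank_eq_zero_iff_isTorsion.mpr fun x =>
    ⟨⟨Nat.card N, mem_nonZeroDivisors_of_ne_zero (by simp [Nat.card_pos.ne'])⟩, by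
      simp [Nat.cast_smul_eq_nsmul, card_nsmul_eq_zero']⟩

theorem finrank_fractionRing_tensorProduct (R M : Type*) [CommRing R] [IsDomain R]
    [AddCommGroup M] [Module R M] :
    Module.finrank (FractionRing R) (TensorProduct R (FractionRing R) M) = Module.finrank R M :=
  (TensorProduct.isBaseChange R M (FractionRing R)).finrank_eq

theorem specialization_controls_rank_general
    (p : ℕ) [Fact p.Prime]
    (M : Type*) [AddCommGroup M] [Module (PowerSeries ℤ_[p]) M]
    [Module.Finite (PowerSeries ℤ_[p]) M]
    (r : ℕ) (f : ℕ → PowerSeries ℤ_[p])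
    (hprime : ∀ n, Prime (f n))
    (hcoprime : ∀ m n, m ≠ n → Ideal.span {f m} ≠ Ideal.span {f n})
    (hrank : ∀ n, Module.rank ℤ_[p]
      (RestrictScalars ℤ_[p] (PowerSeries ℤ_[p])
        (M ⧸ (Ideal.span {f n} • (⊤ : Submodule (PowerSeries ℤ_[p]) M)))) ≤ r) :
    (Module.IsTorsion (PowerSeries ℤ_[p]) M ∨
      Module.rank (FractionRing (PowerSeries ℤ_[p]))
        (TensorProduct (PowerSeries ℤ_[p]) (FractionRing (PowerSeries ℤ_[p])) M) ≤ r) ∧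
    ((∀ n, Finite
        (M ⧸ (Ideal.span {f n} • (⊤ : Submodule (PowerSeries ℤ_[p]) M)))) →
      Module.IsTorsion (PowerSeries ℤ_[p]) M) := by
  have hp : algebraMap ℤ_[p] (PowerSeries ℤ_[p]) p ≠ 0 := by
    rw [map_natCast, ← map_natCast PowerSeries.C, map_ne_zero_iff _ PowerSeries.C_injective]
    exact Nat.cast_ne_zero.mpr (Fact.out : p.Prime).ne_zero
  have hassoc : Pairwise fun m n => ¬ Associated (f m) (f n) := fun m n hmn h =>
    hcoprime m n hmn (Ideal.span_singleton_eq_span_singleton.mpr h)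
  obtain ⟨n, hn⟩ := (eventually_finrank_le_rank_restrictScalars_quotient (M := M)
    PadicInt.irreducible_p hp hprime hassoc).exists
  refine ⟨Or.inr ?_, fun hfin => ?_⟩
  · rw [← Module.finrank_eq_rank, finrank_fractionRing_tensorProduct]
    exact hn.trans (hrank n)
  · have : Finite (RestrictScalars ℤ_[p] (PowerSeries ℤ_[p])
        (M ⧸ (Ideal.span {f n} • (⊤ : Submodule (PowerSeries ℤ_[p]) M)))) := hfin n
    rw [← Module.finrank_eq_zero_iff_isTorsion, ← Nat.le_zero]
    exact_mod_cast hn.trans_eq Module.rank_eq_zero_of_finite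

theorem specialization_controls_rank
    (p : ℕ) [Fact p.Prime]
    (M : Type*) [AddCommGroup M] [Module (PowerSeries ℤ_[p]) M]
    [Module.Finite (PowerSeries ℤ_[p]) M]
    (r : ℕ) (f : ℕ → PowerSeries ℤ_[p])
    (hprime : ∀ n, Prime (f n))
    (hcoprime : ∀ m n, m ≠ n → Ideal.span {f m} ≠ Ideal.span {f n})
    (hfg : ∀ n, Module.Finite ℤ_[p]
      (RestrictScalars ℤ_[p] (PowerSeries ℤ_[p])
        (M ⧸ (Ideal.span {f n} • (⊤ : Submodule (PowerSeries ℤ_[p]) M)))))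
    (hrank : ∀ n, Module.rank ℤ_[p]
      (RestrictScalars ℤ_[p] (PowerSeries ℤ_[p])
        (M ⧸ (Ideal.span {f n} • (⊤ : Submodule (PowerSeries ℤ_[p]) M)))) ≤ r) :
    (Module.IsTorsion (PowerSeries ℤ_[p]) M ∨
      Module.rank (FractionRing (PowerSeries ℤ_[p]))
        (TensorProduct (PowerSeries ℤ_[p]) (FractionRing (PowerSeries ℤ_[p])) M) ≤ r) ∧
    ((∀ n, Finite
        (M ⧸ (Ideal.span {f n} • (⊤ : Submodule (PowerSeries ℤ_[p]) M)))) →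
      Module.IsTorsion (PowerSeries ℤ_[p]) M) :=
  specialization_controls_rank_general p M r f hprime hcoprime hrank
end

section
/- Let O be the valuation ring of a finite extension K of ℚ_p, and let f = Σ a_i X^i ∈ ℋ_h (logarithmic order h) with the property that for every n ≥ 1 and every j with l ≤ j ≤ l' (where h = l' − l), f is divisible by ω_n^{[j]}(X) = (1+X)^{p^n} − (1+p)^{jp^n} in ℋ_h. Then f = 0. -/
/-- `ω_n^{[j]} = (1+X)^{p^n} − (1+p)^{j p^n}` as a power series over `ℚ_p`,
allowing `j ∈ ℤ`. -/
noncomputable def omegaNJ (p : ℕ) [Fact p.Prime] (n : ℕ) (j : ℤ) :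
    PowerSeries ℚ_[p] :=
  (1 + PowerSeries.X) ^ (p ^ n) -
    PowerSeries.C (R := ℚ_[p]) ((1 + (p : ℚ_[p])) ^ (j * (p : ℤ) ^ n))

/-!
Suppose `f ≠ 0` and fix `m ≥ 1`. Lagrange interpolation in the variable `(1+X)^{p^m}` turns the
`h + 1` divisibilities by `ω_m^{[j]}`, `l ≤ j ≤ l'`, into `f = Q G` with `Q = ∏ⱼ ω_m^{[j]}` and
`G ∈ ℋ_h`. Let `v_r` be the Gauss valuation on the circle `v(x) = r`. Every `ω_m^{[j]}` has
`v_1 ≥ m`, so `v_1(G) ≤ v_1(f) - (h + 1) m`, and a fortiori `v_r(G) ≤ v_1(f) - (h + 1) m` for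
`r = p^{-m}`. On that circle the monic `Q` of degree `(h + 1) p^m` has `v_r(Q) ≤ h + 1`, and `v_r`
is multiplicative, so `v_r(f) ≤ h + 1 + v_1(f) - (h + 1) m`. The growth condition of order `h`
gives `v_r(f) ≥ C - h (m + h + 1)`, which is incompatible for large `m`.
-/

open PowerSeries

namespace Padic

variable {p : ℕ} [Fact p.Prime]

theorem le_valuation_of_norm_le {x : ℚ_[p]} (hx : x ≠ 0) {B : ℤ} (h : ‖x‖ ≤ (p : ℝ) ^ (-B)) :
    B ≤ x.valuation := by
  rw [norm_eq_zpow_neg_valuation hx,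
    zpow_le_zpow_iff_right₀ (Nat.one_lt_cast.mpr (Fact.out : p.Prime).one_lt)] at h
  omega

theorem coe_le_addValuation_iff {x : ℚ_[p]} {B : ℤ} :
    (B : WithTop ℤ) ≤ addValuation x ↔ (x ≠ 0 → B ≤ x.valuation) := by
  by_cases hx : x = 0
  · simp [hx]
  · simp [hx, addValuation.apply hx]

theorem le_valuation_add_of_le {x y : ℚ_[p]} {B : ℤ} (hx : x ≠ 0 → B ≤ x.valuation)
    (hy : y ≠ 0 → B ≤ y.valuation) (hxy : x + y ≠ 0) : B ≤ (x + y).valuation :=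
  coe_le_addValuation_iff.mp
    (addValuation.map_le_add (coe_le_addValuation_iff.mpr hx) (coe_le_addValuation_iff.mpr hy)) hxy

theorem le_valuation_sum {ι : Type*} {s : Finset ι} {g : ι → ℚ_[p]} {B : ℤ}
    (h : ∀ i ∈ s, g i ≠ 0 → B ≤ (g i).valuation) (hs : ∑ i ∈ s, g i ≠ 0) :
    B ≤ (∑ i ∈ s, g i).valuation :=
  coe_le_addValuation_iff.mp
    (addValuation.map_le_sum fun i hi => coe_le_addValuation_iff.mpr (h i hi)) hs

theorem exists_valuation_le_of_sum_ne_zero {ι : Type*} {s : Finset ι} {g : ι → ℚ_[p]}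
    (hs : ∑ i ∈ s, g i ≠ 0) : ∃ i ∈ s, g i ≠ 0 ∧ (g i).valuation ≤ (∑ i ∈ s, g i).valuation := by
  by_contra! h
  have := le_valuation_sum (B := (∑ i ∈ s, g i).valuation + 1)
    (fun i hi hgi => h i hi hgi) hs
  omega

theorem addValuation_add_eq_left {x y : ℚ_[p]} (hx : x ≠ 0)
    (hy : y ≠ 0 → x.valuation < y.valuation) : addValuation (x + y) = x.valuation := by
  rw [addValuation.map_add_eq_of_lt_left, addValuation.apply hx]
  by_cases hy0 : y = 0
  · simp [hy0, addValuation.apply hx]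
  · rw [addValuation.apply hx, addValuation.apply hy0]
    exact WithTop.coe_lt_coe.mpr (hy hy0)

end Padic

theorem norm_zpow_sub_one_le {K : Type*} [NormedField K] [IsUltrametricDist K] {x : K}
    (hx : ‖x‖ = 1) (j : ℤ) : ‖x ^ j - 1‖ ≤ ‖x - 1‖ := by
  have hpow : ∀ n : ℕ, ‖x ^ n - 1‖ ≤ ‖x - 1‖ := fun n => by
    rw [← geom_sum_mul, norm_mul]
    refine mul_le_of_le_one_left (norm_nonneg _) ?_
    refine IsUltrametricDist.norm_sum_le_of_forall_le_of_nonneg zero_le_one fun i _ => ?_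
    rw [norm_pow, hx, one_pow]
  obtain ⟨n, rfl | rfl⟩ := j.eq_nat_or_neg
  · exact_mod_cast hpow n
  · have hx0 : x ≠ 0 := norm_ne_zero_iff.mp (by rw [hx]; exact one_ne_zero)
    have : x ^ (-(n : ℤ)) - 1 = -x ^ (-(n : ℤ)) * (x ^ n - 1) := by
      rw [zpow_neg, zpow_natCast]
      field_simp
      ring
    rw [this, norm_mul, norm_neg, norm_zpow, hx, one_zpow, one_mul]
    exact hpow n

variable {p : ℕ} [Fact p.Prime]

variable (p) in
noncomputable def omegaNode (n : ℕ) (j : ℤ) : ℚ_[p] := (1 + (p : ℚ_[p])) ^ (j * (p : ℤ) ^ n)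

theorem norm_omegaNode_sub_one_le (n : ℕ) (j : ℤ) :
    ‖omegaNode p n j - 1‖ ≤ (p : ℝ) ^ (-(n + 1 : ℤ)) := by
  set γ : ℤ := (1 + p) ^ p ^ n
  have hγ : ‖(γ : ℚ_[p]) - 1‖ ≤ (p : ℝ) ^ (-(n + 1 : ℤ)) := by
    have hdvd : (p : ℤ) ^ (n + 1) ∣ γ - 1 := by
      simpa using dvd_sub_pow_of_dvd_sub (p := p) (a := 1 + (p : ℤ)) (b := 1) (by simp) n
    exact_mod_cast (Padic.norm_int_le_pow_iff_dvd (γ - 1) (n + 1)).mpr hdvd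
  have hγ1 : ‖(γ : ℚ_[p])‖ = 1 := by
    have hlt : (p : ℝ) ^ (-(n + 1 : ℤ)) < 1 :=
      zpow_lt_one_of_neg₀ (Nat.one_lt_cast.mpr (Fact.out : p.Prime).one_lt) (by omega)
    simpa using Padic.norm_eq_of_norm_sub_lt_right (hγ.trans_lt (by simpa using hlt))
  have hnode : omegaNode p n j = (γ : ℚ_[p]) ^ j := by
    rw [omegaNode, mul_comm, zpow_mul]
    push_cast [γ]
    rw [← zpow_natCast]
    norm_cast
  rw [hnode]
  exact (norm_zpow_sub_one_le hγ1 j).trans hγ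

theorem omegaNode_injective (n : ℕ) : Function.Injective (omegaNode p n) := by
  have hq : Function.Injective fun k : ℤ => (1 + (p : ℚ)) ^ k :=
    zpow_right_injective₀ (by positivity) (by simpa using (Fact.out : p.Prime).ne_zero)
  have hpn : (p : ℤ) ^ n ≠ 0 := pow_ne_zero _ (by exact_mod_cast (Fact.out : p.Prime).ne_zero)
  intro j j' hjj
  have : ((1 + (p : ℚ)) ^ (j * (p : ℤ) ^ n) : ℚ) = (1 + (p : ℚ)) ^ (j' * (p : ℤ) ^ n) := by
    apply Rat.cast_injective (α := ℚ_[p])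
    push_cast
    exact hjj
  exact mul_right_cancel₀ hpn (hq this)

variable (p) in
noncomputable def omegaPoly (n : ℕ) (j : ℤ) : Polynomial ℚ_[p] :=
  (Polynomial.X + Polynomial.C 1) ^ (p ^ n) - Polynomial.C (omegaNode p n j)

theorem coe_omegaPoly (n : ℕ) (j : ℤ) : (omegaPoly p n j : ℚ_[p]⟦X⟧) = omegaNJ p n j := by
  simp [omegaPoly, omegaNJ, omegaNode, add_comm]

theorem isMonicOfDegree_omegaPoly (n : ℕ) (j : ℤ) :
    (omegaPoly p n j).IsMonicOfDegree (p ^ n) := by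
  have h := ((Polynomial.isMonicOfDegree_X_add_one (1 : ℚ_[p])).pow (p ^ n)).sub
    (q := Polynomial.C (omegaNode p n j))
  rw [one_mul, Polynomial.natDegree_C] at h
  exact h (pow_pos (Fact.out : p.Prime).pos n)

theorem coeff_omegaNJ (n i : ℕ) (j : ℤ) :
    coeff i (omegaNJ p n j) =
      ((p ^ n).choose i : ℚ_[p]) - if i = 0 then omegaNode p n j else 0 := by
  rw [← coe_omegaPoly, Polynomial.coeff_coe, omegaPoly, Polynomial.coeff_sub,
    map_one, Polynomial.coeff_X_add_one_pow, Polynomial.coeff_C]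

theorem le_valuation_coeff_omegaNJ {n i : ℕ} {j : ℤ} (hc : coeff i (omegaNJ p n j) ≠ 0) :
    max 0 ((n : ℤ) - i) ≤ (coeff i (omegaNJ p n j)).valuation := by
  rw [coeff_omegaNJ] at hc ⊢
  rcases Nat.eq_zero_or_pos i with rfl | hi
  · simp only [Nat.choose_zero_right, Nat.cast_one, if_true] at hc ⊢
    have := Padic.le_valuation_of_norm_le hc
      ((norm_sub_rev _ _).trans_le (norm_omegaNode_sub_one_le n j))
    omega
  · have hchoose : (p ^ n).choose i ≠ 0 := by
      rintro h
      simp [h, hi.ne'] at hc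
    have hsum := Nat.factorization_choose_prime_pow_add_factorization (Fact.out : p.Prime)
      (by by_contra! h; exact hchoose (Nat.choose_eq_zero_of_lt h)) hi.ne'
    have hlt := Nat.factorization_lt p hi.ne'
    rw [if_neg hi.ne', sub_zero, Padic.valuation_natCast,
      ← Nat.factorization_def _ (Fact.out : p.Prime)]
    omega

theorem pow_mul_ell_le {p : ℕ} (hp : 1 < p) (h m i : ℕ) :
    p ^ m * (h * ell p i) ≤ i + p ^ m * (h * (m + h + 1)) := by
  rcases Nat.eq_zero_or_pos i with rfl | hi
  · simp [ell]
  set r := Nat.log p i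
  have hell : ell p i = r + 1 := if_neg hi.ne'
  rw [hell]
  by_cases hr : r ≤ m + h
  · have : p ^ m * (h * (r + 1)) ≤ p ^ m * (h * (m + h + 1)) := by gcongr
    omega
  · have hsplit : h * (r + 1) = h * (m + h + 1) + h * (r - m - h) := by
      rw [← Nat.mul_add]; congr 1; omega
    have hexcess : p ^ m * (h * (r - m - h)) ≤ i :=
      calc p ^ m * (h * (r - m - h)) ≤ p ^ m * (p ^ h * p ^ (r - m - h)) := by
            gcongr
            exacts [(Nat.lt_pow_self hp).le, (Nat.lt_pow_self hp).le]
        _ = p ^ r := by rw [← pow_add, ← pow_add]; congr 1; omega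
        _ ≤ i := Nat.pow_log_le_self p hi.ne'
    rw [hsplit, Nat.mul_add]
    omega

namespace PowerSeries

/-- `α v(aᵢ) + β i` is `α` times the valuation of the monomial `aᵢ xⁱ` on the circle
`v(x) = β / α`, so the least weight of a series is `α` times its Gauss valuation there. -/
noncomputable def weight (α β : ℤ) (F : ℚ_[p]⟦X⟧) (i : ℕ) : ℤ :=
  α * (coeff i F).valuation + β * i

def WeightLowerBound (α β B : ℤ) (F : ℚ_[p]⟦X⟧) : Prop :=
  ∀ i, coeff i F ≠ 0 → B ≤ weight α β F i

structure IsLeastWeightIndex (α β : ℤ) (F : ℚ_[p]⟦X⟧) (k : ℕ) : Prop where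
  coeff_ne_zero : coeff k F ≠ 0
  weight_le : WeightLowerBound α β (weight α β F k) F
  weight_lt : ∀ i < k, coeff i F ≠ 0 → weight α β F k < weight α β F i

variable {α β : ℤ}

theorem weight_mul_coeff {F G : ℚ_[p]⟦X⟧} {a b : ℕ} (ha : coeff a F ≠ 0) (hb : coeff b G ≠ 0) :
    α * (coeff a F * coeff b G).valuation + β * ↑(a + b) = weight α β F a + weight α β G b := by
  rw [Padic.valuation_mul ha hb, weight, weight]
  push_cast
  ring

theorem WeightLowerBound.mul (hα : 0 ≤ α) {A B : ℤ} {F G : ℚ_[p]⟦X⟧}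
    (hF : WeightLowerBound α β A F) (hG : WeightLowerBound α β B G) :
    WeightLowerBound α β (A + B) (F * G) := by
  intro i hi
  rw [coeff_mul] at hi
  obtain ⟨⟨a, b⟩, hab, hne, hval⟩ := Padic.exists_valuation_le_of_sum_ne_zero hi
  have ha : coeff a F ≠ 0 := left_ne_zero_of_mul hne
  have hb : coeff b G ≠ 0 := right_ne_zero_of_mul hne
  rw [Finset.HasAntidiagonal.mem_antidiagonal] at hab
  have hterm := weight_mul_coeff (α := α) (β := β) ha hb
  rw [hab] at hterm
  have := mul_le_mul_of_nonneg_left hval hα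
  rw [weight, coeff_mul]
  linarith [hF a ha, hG b hb]

theorem WeightLowerBound.one : WeightLowerBound α β 0 (1 : ℚ_[p]⟦X⟧) := by
  intro i hi
  obtain rfl : i = 0 := by by_contra h; simp [coeff_one, h] at hi
  simp [weight]

theorem WeightLowerBound.prod (hα : 0 ≤ α) {ι : Type*} {s : Finset ι} {F : ι → ℚ_[p]⟦X⟧}
    {B : ι → ℤ} (h : ∀ i ∈ s, WeightLowerBound α β (B i) (F i)) :
    WeightLowerBound α β (∑ i ∈ s, B i) (∏ i ∈ s, F i) := by
  classical
  induction s using Finset.induction_on with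
  | empty => simpa using WeightLowerBound.one
  | insert a s ha ih =>
    rw [Finset.sum_insert ha, Finset.prod_insert ha]
    exact (h a (by simp)).mul hα (ih fun i hi => h i (by simp [hi]))

theorem WeightLowerBound.exists_weight_le (hα : 0 ≤ α) {A : ℤ} {F G : ℚ_[p]⟦X⟧}
    (hF : WeightLowerBound α β A F) {i : ℕ} (hi : coeff i (F * G) ≠ 0) :
    ∃ i', coeff i' G ≠ 0 ∧ weight α β G i' ≤ weight α β (F * G) i - A := by
  by_contra! h
  have := (hF.mul hα (B := weight α β (F * G) i - A + 1) fun i' hi' => h i' hi') i hi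
  omega

theorem exists_isLeastWeightIndex {B : ℤ} {F : ℚ_[p]⟦X⟧} (hF : F ≠ 0)
    (hB : WeightLowerBound α β B F) : ∃ k, IsLeastWeightIndex α β F k := by
  classical
  obtain ⟨i₀, hi₀⟩ := exists_coeff_ne_zero_iff_ne_zero.mpr hF
  obtain ⟨W, ⟨i₁, hi₁, rfl⟩, hW⟩ := Int.exists_least_of_bdd
    (P := fun w => ∃ i, coeff i F ≠ 0 ∧ weight α β F i = w)
    ⟨B, fun _ ⟨i, hi, hw⟩ => hw ▸ hB i hi⟩ ⟨_, i₀, hi₀, rfl⟩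
  have hex : ∃ k, coeff k F ≠ 0 ∧ weight α β F k = weight α β F i₁ := ⟨i₁, hi₁, rfl⟩
  obtain ⟨hk, hkW⟩ := Nat.find_spec hex
  refine ⟨Nat.find hex, hk, fun i hi => hkW.symm ▸ hW _ ⟨i, hi, rfl⟩, fun i hlt hi => ?_⟩
  rw [hkW]
  exact lt_of_le_of_ne (hW _ ⟨i, hi, rfl⟩) fun h => Nat.find_min hex hlt ⟨hi, h.symm⟩

open Finset.HasAntidiagonal in
theorem IsLeastWeightIndex.mul (hα : 0 ≤ α) {F G : ℚ_[p]⟦X⟧} {k k' : ℕ}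
    (hF : IsLeastWeightIndex α β F k) (hG : IsLeastWeightIndex α β G k') :
    coeff (k + k') (F * G) ≠ 0 ∧
      weight α β (F * G) (k + k') = weight α β F k + weight α β G k' := by
  have hkk' := weight_mul_coeff (α := α) (β := β) hF.coeff_ne_zero hG.coeff_ne_zero
  set x := coeff k F * coeff k' G
  have hx : x ≠ 0 := mul_ne_zero hF.coeff_ne_zero hG.coeff_ne_zero
  -- `(k, k')` is the only pair of indices whose weights add up to the least possible sum.
  have hrest : ∀ q ∈ (antidiagonal (k + k')).erase (k, k'), coeff q.1 F * coeff q.2 G ≠ 0 →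
      x.valuation + 1 ≤ (coeff q.1 F * coeff q.2 G).valuation := by
    rintro ⟨a, b⟩ hq hne
    obtain ⟨hne', hab⟩ := Finset.mem_erase.mp hq
    rw [mem_antidiagonal] at hab
    have ha : coeff a F ≠ 0 := left_ne_zero_of_mul hne
    have hb : coeff b G ≠ 0 := right_ne_zero_of_mul hne
    have hlt : weight α β F k + weight α β G k' < weight α β F a + weight α β G b := by
      rcases lt_trichotomy a k with h | rfl | h
      · linarith [hF.weight_lt a h ha, hG.weight_le b hb]
      · exact absurd (by simp only [Prod.mk.injEq, true_and]; omega) hne'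
      · linarith [hF.weight_le a ha, hG.weight_lt b (by omega) hb]
    have hab' := weight_mul_coeff (α := α) (β := β) ha hb
    rw [hab] at hab'
    nlinarith
  have hsum : coeff (k + k') (F * G) =
      x + ∑ q ∈ (antidiagonal (k + k')).erase (k, k'), coeff q.1 F * coeff q.2 G := by
    rw [coeff_mul]
    exact (Finset.add_sum_erase _ (fun q => coeff q.1 F * coeff q.2 G)
      (a := (k, k')) (mem_antidiagonal.mpr rfl)).symm
  have hval := Padic.addValuation_add_eq_left hx fun hy => Padic.le_valuation_sum hrest hy
  rw [← hsum] at hval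
  have hne : coeff (k + k') (F * G) ≠ 0 := fun h0 => by simp [h0] at hval
  rw [Padic.addValuation.apply hne, WithTop.coe_eq_coe] at hval
  exact ⟨hne, by rw [weight, hval, hkk']⟩

end PowerSeries

namespace Lagrange

variable {F A ι : Type*} [Field F] [CommRing A] [Algebra F A] {s : Finset ι} {v : ι → F}

theorem sum_nodalWeight_smul_prod_erase [DecidableEq ι] (hvs : Set.InjOn v s) (hs : s.Nonempty)
    (u : A) : ∑ i ∈ s, nodalWeight s v i • ∏ j ∈ s.erase i, (u - algebraMap F A (v j)) = 1 := by
  have := congrArg (Polynomial.aeval u) (sum_basis hvs hs)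
  rw [map_sum, map_one] at this
  rw [← this]
  refine Finset.sum_congr rfl fun i hi => ?_
  rw [basis_eq_prod_sub_inv_mul_nodal_div hi, ← nodal_erase_eq_nodal_div hi, nodal_eq, map_mul,
    Polynomial.aeval_C, map_prod, Algebra.smul_def]
  simp

theorem exists_mem_eq_prod_sub_mul (hs : s.Nonempty) (hvs : Set.InjOn v s) {u f : A}
    {M : Submodule F A} (h : ∀ i ∈ s, ∃ g ∈ M, f = (u - algebraMap F A (v i)) * g) :
    ∃ g ∈ M, f = (∏ i ∈ s, (u - algebraMap F A (v i))) * g := by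
  classical
  choose! g hgM hg using h
  refine ⟨∑ i ∈ s, nodalWeight s v i • g i,
    M.sum_mem fun i hi => M.smul_mem _ (hgM i hi), ?_⟩
  calc f = (∑ i ∈ s, nodalWeight s v i • ∏ j ∈ s.erase i, (u - algebraMap F A (v j))) * f := by
        rw [sum_nodalWeight_smul_prod_erase hvs hs, one_mul]
    _ = _ := by
      rw [Finset.sum_mul, Finset.mul_sum]
      refine Finset.sum_congr rfl fun i hi => ?_
      rw [← Finset.mul_prod_erase s _ hi, mul_smul_comm, smul_mul_assoc, mul_comm _ (∏ j ∈ _, _),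
        mul_assoc, ← hg i hi]

end Lagrange

variable (p) in
def HhSubmodule (h : ℕ) : Submodule ℚ_[p] ℚ_[p]⟦X⟧ where
  carrier := Hh p h
  zero_mem' := ⟨0, by simp⟩
  add_mem' := by
    rintro F G ⟨C, hC⟩ ⟨D, hD⟩
    refine ⟨min C D, fun i hi => ?_⟩
    rw [map_add] at hi ⊢
    have := Padic.le_valuation_add_of_le (B := min C D - h * ell p i)
      (fun hF => by linarith [hC i hF, min_le_left C D])
      (fun hG => by linarith [hD i hG, min_le_right C D]) hi
    omega
  smul_mem' := by
    rintro c F ⟨C, hC⟩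
    refine ⟨c.valuation + C, fun i hi => ?_⟩
    rw [coeff_smul, smul_eq_mul] at hi ⊢
    rw [Padic.valuation_mul (left_ne_zero_of_mul hi) (right_ne_zero_of_mul hi)]
    linarith [hC i (right_ne_zero_of_mul hi)]

theorem weightLowerBound_of_Hh {h : ℕ} {C : ℤ} {F : ℚ_[p]⟦X⟧}
    (hC : ∀ i, coeff i F ≠ 0 → C ≤ (coeff i F).valuation + h * ell p i) (m : ℕ) :
    WeightLowerBound (p ^ m) 1 (p ^ m * (C - h * (m + h + 1))) F := by
  intro i hi
  have hell : (p : ℤ) ^ m * (h * ell p i) ≤ i + p ^ m * (h * (m + h + 1)) := by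
    exact_mod_cast pow_mul_ell_le (Fact.out : p.Prime).one_lt h m i
  have := mul_le_mul_of_nonneg_left (hC i hi) (by positivity : (0 : ℤ) ≤ p ^ m)
  rw [weight]
  linarith

theorem omegaNJ_eq_sub_algebraMap (n : ℕ) (j : ℤ) :
    omegaNJ p n j = (1 + X) ^ (p ^ n) - algebraMap ℚ_[p] ℚ_[p]⟦X⟧ (omegaNode p n j) := by
  rw [algebraMap_eq]
  rfl

theorem weightLowerBound_omegaNJ {α β : ℤ} (hα : 0 ≤ α) (hβ : 0 ≤ β) (n : ℕ) (j : ℤ) :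
    WeightLowerBound α β 0 (omegaNJ p n j) := fun i hi => by
  have := (le_max_left _ _).trans (le_valuation_coeff_omegaNJ hi)
  rw [weight]
  positivity

theorem weightLowerBound_one_one_omegaNJ (n : ℕ) (j : ℤ) :
    WeightLowerBound 1 1 n (omegaNJ p n j) := fun i hi => by
  have := (le_max_right _ _).trans (le_valuation_coeff_omegaNJ hi)
  rw [weight]
  omega

theorem coeff_prod_omegaNJ (n : ℕ) (J : Finset ℤ) :
    coeff (J.card * p ^ n) (∏ j ∈ J, omegaNJ p n j) = 1 := by
  have hmonic : ∀ j ∈ J, (omegaPoly p n j).Monic := fun j _ => (isMonicOfDegree_omegaPoly n j).monic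
  have hdeg : (∏ j ∈ J, omegaPoly p n j).natDegree = J.card * p ^ n := by
    simp [Polynomial.natDegree_prod_of_monic _ _ hmonic,
      (isMonicOfDegree_omegaPoly n _).natDegree_eq]
  have hcoe : ∏ j ∈ J, omegaNJ p n j =
      ((∏ j ∈ J, omegaPoly p n j : Polynomial ℚ_[p]) : ℚ_[p]⟦X⟧) := by
    rw [← Polynomial.coeToPowerSeries.ringHom_apply, map_prod]
    simp [coe_omegaPoly]
  rw [hcoe, Polynomial.coeff_coe, ← hdeg]
  exact (Polynomial.monic_prod_of_monic _ _ hmonic).coeff_natDegree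

theorem exists_weight_le_of_eq_prod_omegaNJ_mul {m : ℕ} {J : Finset ℤ} {f G : ℚ_[p]⟦X⟧} {B : ℤ}
    (hG : WeightLowerBound (p ^ m) 1 B G) (hfG : f = (∏ j ∈ J, omegaNJ p m j) * G) {i₀ : ℕ}
    (hi₀ : coeff i₀ f ≠ 0) :
    ∃ k, coeff k f ≠ 0 ∧
      weight (p ^ m) 1 f k ≤ p ^ m * (J.card + weight 1 1 f i₀ - J.card * m) := by
  set Q := ∏ j ∈ J, omegaNJ p m j
  have hpm : (0 : ℤ) ≤ p ^ m := by positivity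
  have hQ : WeightLowerBound (p ^ m) 1 0 Q := by
    simpa using WeightLowerBound.prod hpm fun j _ => weightLowerBound_omegaNJ hpm zero_le_one m j
  have hQ₁ : WeightLowerBound 1 1 (J.card * m) Q := by
    simpa using WeightLowerBound.prod zero_le_one fun j _ => weightLowerBound_one_one_omegaNJ m j
  rw [hfG] at hi₀ ⊢
  obtain ⟨i', hi', hwi'⟩ := hQ₁.exists_weight_le zero_le_one hi₀
  have hQG : Q * G ≠ 0 := by rintro h; simp [h] at hi₀
  obtain ⟨k₁, hk₁⟩ := exists_isLeastWeightIndex (left_ne_zero_of_mul hQG) hQ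
  obtain ⟨k₂, hk₂⟩ := exists_isLeastWeightIndex (right_ne_zero_of_mul hQG) hG
  obtain ⟨hk, hwk⟩ := hk₁.mul hpm hk₂
  refine ⟨k₁ + k₂, hk, ?_⟩
  have htop : coeff (J.card * p ^ m) Q = 1 := coeff_prod_omegaNJ m J
  have hQtop : weight (p ^ m) 1 Q k₁ ≤ J.card * p ^ m :=
    calc weight (p ^ m) 1 Q k₁ ≤ weight (p ^ m) 1 Q (J.card * p ^ m) :=
          hk₁.weight_le _ (htop ▸ one_ne_zero)
      _ = J.card * p ^ m := by simp [weight, htop]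
  have hGi' : weight (p ^ m) 1 G k₂ ≤ p ^ m * weight 1 1 G i' := by
    have := hk₂.weight_le i' hi'
    simp only [weight] at this ⊢
    nlinarith [one_le_pow₀ (n := m) (by exact_mod_cast (Fact.out : p.Prime).one_le : (1 : ℤ) ≤ p)]
  rw [hwk]
  nlinarith

theorem Hh_uniqueness (p : ℕ) [Fact p.Prime] (h : ℕ) (l l' : ℤ)
    (hll : (h : ℤ) = l' - l)
    (f : PowerSeries ℚ_[p]) (hf : f ∈ Hh p h)
    (hdiv : ∀ n : ℕ, 1 ≤ n → ∀ j : ℤ, l ≤ j → j ≤ l' →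
      ∃ g ∈ Hh p h, f = omegaNJ p n j * g) :
    f = 0 := by
  by_contra hf0
  obtain ⟨C, hC⟩ := hf
  obtain ⟨i₀, hi₀⟩ := exists_coeff_ne_zero_iff_ne_zero.mpr hf0
  set m := ((h + 1) ^ 2 + weight 1 1 f i₀ - C).toNat + 1
  set J := Finset.Icc l l'
  have hJ : (J.card : ℤ) = h + 1 := by simp [J]; omega
  obtain ⟨G, ⟨B, hB⟩, hfG⟩ : ∃ G ∈ HhSubmodule p h, f = (∏ j ∈ J, omegaNJ p m j) * G := by
    simp_rw [omegaNJ_eq_sub_algebraMap]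
    refine Lagrange.exists_mem_eq_prod_sub_mul ⟨l, by simp [J]; omega⟩
      (omegaNode_injective m).injOn fun j hj => ?_
    rw [Finset.mem_Icc] at hj
    obtain ⟨g, hg, hfg⟩ := hdiv m (by omega) j hj.1 hj.2
    exact ⟨g, hg, by rwa [omegaNJ_eq_sub_algebraMap] at hfg⟩
  obtain ⟨k, hk, hwk⟩ :=
    exists_weight_le_of_eq_prod_omegaNJ_mul (weightLowerBound_of_Hh hB m) hfG hi₀
  have hbound := le_of_mul_le_mul_left ((weightLowerBound_of_Hh hC m k hk).trans hwk)
    (pow_pos (Int.natCast_pos.mpr (Fact.out : p.Prime).pos) m)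
  have hm : (h + 1) ^ 2 + weight 1 1 f i₀ - C < m := by
    have := Int.self_le_toNat ((h + 1) ^ 2 + weight 1 1 f i₀ - C)
    omega
  rw [hJ] at hbound
  linarith
end
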